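/- There is no one-layer spiking neural network with a single genuine input neuron (plus auxiliary constant-firing input neurons) whose firing-time map equals f₂(x) = x + c₁ for x < 0 and f₂(x) = c₁ for x ≥ 0 on an interval [a,b] with a < 0 < b. -/
import Mathlib


/-- `FiresAt w dl θ t τ`: in the Spike Response Model with linear response, the
output neuron with incoming weights `w`, delays `dl` and threshold `θ` fires at
time `τ` on input firing times `t`; i.e. there is a nonempty causal subset `S`
with positive weight sum whose spikes arrive strictly before `τ`, all other
spikes arrive no earlier than `τ`, and `τ` is given by the SRM formula. -/
def FiresAt {n : ℕ} (w dl : Fin n → ℝ) (θ : ℝ) (t : Fin n → ℝ) (τ : ℝ) : Prop :=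
  ∃ S : Finset (Fin n), S.Nonempty ∧ 0 < ∑ i ∈ S, w i ∧
    (∀ k ∈ S, t k + dl k < τ) ∧ (∀ k ∉ S, τ ≤ t k + dl k) ∧
    τ = (θ + ∑ i ∈ S, w i * (t i + dl i)) / (∑ i ∈ S, w i)

private lemma snn_sum_diff {n : ℕ} (w dl taux : Fin (n+1) → ℝ)
    (S : Finset (Fin (n+1))) (x1 x2 : ℝ) :
    ∑ i ∈ S, w i * ((if i = 0 then x1 else taux i) + dl i)
      - ∑ i ∈ S, w i * ((if i = 0 then x2 else taux i) + dl i)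
    = (if (0 : Fin (n+1)) ∈ S then w 0 * (x1 - x2) else 0) := by
  rw [← Finset.sum_sub_distrib]
  by_cases h : (0 : Fin (n+1)) ∈ S
  · rw [if_pos h, Finset.sum_eq_single_of_mem 0 h]
    · simp only [if_pos rfl]
      ring_nf
      simp
    · intro i _ hi
      simp only [if_neg hi]; ring
  · rw [if_neg h, Finset.sum_eq_zero]
    intro i hi
    have hi0 : i ≠ 0 := fun e => h (e ▸ hi)
    simp only [if_neg hi0]; ring

private lemma snn_seq_ne (c : ℝ) (hc : c ≠ 0) {k1 k2 : ℕ} (hk : k1 ≠ k2) :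
    c / ((k1 : ℝ) + 2) ≠ c / ((k2 : ℝ) + 2) := by
  intro h
  have h1 : ((k1 : ℝ) + 2) ≠ 0 := by positivity
  have h2 : ((k2 : ℝ) + 2) ≠ 0 := by positivity
  rw [div_eq_div_iff h1 h2] at h
  have : ((k2 : ℝ) + 2) = ((k1 : ℝ) + 2) := mul_left_cancel₀ hc h
  have : (k1 : ℝ) = (k2 : ℝ) := by linarith
  exact hk (by exact_mod_cast this)

/-- no one-layer SNN with one genuine input neuron (firing at time
`x`) and arbitrarily many auxiliary input neurons firing at constant times has
firing-time map `f₂(x) = x + c₁` for `x < 0`, `f₂(x) = c₁` for `x ≥ 0`, on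
`[a,b]` with `a < 0 < b`. -/
theorem stmt9 (a b c1 : ℝ) (ha : a < 0) (hb : 0 < b) :
    ¬ ∃ (n : ℕ) (w dl taux : Fin (n+1) → ℝ) (θ : ℝ),
      0 < θ ∧ (∀ i, 0 ≤ dl i) ∧
      ∀ x ∈ Set.Icc a b,
        FiresAt w dl θ (fun i => if i = 0 then x else taux i)
          (if x < 0 then x + c1 else c1) := by
  rintro ⟨n, w, dl, taux, θ, hθ, hdl, h⟩
  -- negative sequence x k = a / (k+2)
  have hxneg : ∀ k : ℕ, a / ((k : ℝ) + 2) ∈ Set.Icc a b ∧ a / ((k : ℝ) + 2) < 0 := by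
    intro k
    have hk : (0 : ℝ) < (k : ℝ) + 2 := by positivity
    have hneg : a / ((k : ℝ) + 2) < 0 := div_neg_of_neg_of_pos ha hk
    refine ⟨⟨?_, ?_⟩, hneg⟩
    · rw [le_div_iff₀ hk]; nlinarith
    · linarith
  have hN : ∀ k : ℕ, ∃ S : Finset (Fin (n+1)), S.Nonempty ∧ 0 < ∑ i ∈ S, w i ∧
      (∀ j ∈ S, (if j = 0 then a / ((k : ℝ) + 2) else taux j) + dl j
          < a / ((k : ℝ) + 2) + c1) ∧
      (∀ j ∉ S, a / ((k : ℝ) + 2) + c1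
          ≤ (if j = 0 then a / ((k : ℝ) + 2) else taux j) + dl j) ∧
      a / ((k : ℝ) + 2) + c1 = (θ + ∑ i ∈ S,
          w i * ((if i = 0 then a / ((k : ℝ) + 2) else taux i) + dl i)) /
          (∑ i ∈ S, w i) := by
    intro k
    have := h (a / ((k : ℝ) + 2)) (hxneg k).1
    rw [if_pos (hxneg k).2] at this
    exact this
  choose g hg1 hg2 hg3 hg4 hg5 using hN
  obtain ⟨k1, k2, hkne, hSeq⟩ := Finite.exists_ne_map_eq_of_infinite g
  set x1 := a / ((k1 : ℝ) + 2) with hx1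
  set x2 := a / ((k2 : ℝ) + 2) with hx2
  have hx12 : x1 ≠ x2 := snn_seq_ne a (ne_of_lt ha) hkne
  have hWne : (∑ i ∈ g k1, w i) ≠ 0 := ne_of_gt (hg2 k1)
  have hE1 : (x1 + c1) * (∑ i ∈ g k1, w i)
      = θ + ∑ i ∈ g k1, w i * ((if i = 0 then x1 else taux i) + dl i) :=
    (eq_div_iff hWne).mp (hg5 k1)
  have hE2 : (x2 + c1) * (∑ i ∈ g k1, w i)
      = θ + ∑ i ∈ g k1, w i * ((if i = 0 then x2 else taux i) + dl i) := by
    have := (eq_div_iff (ne_of_gt (hg2 k2))).mp (hg5 k2)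
    rwa [← hSeq] at this
  have hdiff : (x1 - x2) * (∑ i ∈ g k1, w i)
      = (if (0 : Fin (n+1)) ∈ g k1 then w 0 * (x1 - x2) else 0) := by
    rw [← snn_sum_diff w dl taux (g k1) x1 x2]; linarith
  have h0mem : (0 : Fin (n+1)) ∈ g k1 := by
    by_contra h0
    rw [if_neg h0] at hdiff
    exact hWne (by
      have := mul_eq_zero.mp hdiff
      rcases this with h' | h'
      · exact absurd (sub_eq_zero.mp h') hx12
      · exact h')
  rw [if_pos h0mem] at hdiff
  have hw0 : w 0 = ∑ i ∈ g k1, w i := by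
    have hsub : x1 - x2 ≠ 0 := sub_ne_zero.mpr hx12
    have : (x1 - x2) * (∑ i ∈ g k1, w i - w 0) = 0 := by linear_combination hdiff
    rcases mul_eq_zero.mp this with h' | h'
    · exact absurd h' hsub
    · linarith [sub_eq_zero.mp h']
  have hw0pos : 0 < w 0 := hw0 ▸ hg2 k1
  have hd0 : dl 0 < c1 := by
    have := hg3 k1 0 h0mem
    rw [if_pos rfl] at this
    linarith
  -- positive side
  set m := min b ((c1 - dl 0) / 2) with hm
  have hmpos : 0 < m := lt_min hb (by linarith)
  have hyk : ∀ k : ℕ, m / ((k : ℝ) + 2) ∈ Set.Icc a b ∧ ¬ (m / ((k : ℝ) + 2) < 0)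
      ∧ m / ((k : ℝ) + 2) + dl 0 < c1 := by
    intro k
    have hk : (0 : ℝ) < (k : ℝ) + 2 := by positivity
    have hpos : 0 < m / ((k : ℝ) + 2) := div_pos hmpos hk
    have hle : m / ((k : ℝ) + 2) ≤ m := by
      rw [div_le_iff₀ hk]; nlinarith
    have hmb : m ≤ b := min_le_left _ _
    have hmc : m ≤ (c1 - dl 0) / 2 := min_le_right _ _
    exact ⟨⟨by linarith, by linarith⟩, by linarith, by linarith⟩
  have hP : ∀ k : ℕ, ∃ S : Finset (Fin (n+1)), S.Nonempty ∧ 0 < ∑ i ∈ S, w i ∧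
      (∀ j ∈ S, (if j = 0 then m / ((k : ℝ) + 2) else taux j) + dl j < c1) ∧
      (∀ j ∉ S, c1 ≤ (if j = 0 then m / ((k : ℝ) + 2) else taux j) + dl j) ∧
      c1 = (θ + ∑ i ∈ S,
          w i * ((if i = 0 then m / ((k : ℝ) + 2) else taux i) + dl i)) /
          (∑ i ∈ S, w i) := by
    intro k
    have := h (m / ((k : ℝ) + 2)) (hyk k).1
    rw [if_neg (hyk k).2.1] at this
    exact this
  choose g' hg1' hg2' hg3' hg4' hg5' using hP
  obtain ⟨l1, l2, hlne, hSeq'⟩ := Finite.exists_ne_map_eq_of_infinite g'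
  set y1 := m / ((l1 : ℝ) + 2) with hy1
  set y2 := m / ((l2 : ℝ) + 2) with hy2
  have hy12 : y1 ≠ y2 := snn_seq_ne m (ne_of_gt hmpos) hlne
  have h0mem' : (0 : Fin (n+1)) ∈ g' l1 := by
    by_contra h0
    have := hg4' l1 0 h0
    rw [if_pos rfl] at this
    linarith [(hyk l1).2.2]
  have hWne' : (∑ i ∈ g' l1, w i) ≠ 0 := ne_of_gt (hg2' l1)
  have hF1 : c1 * (∑ i ∈ g' l1, w i)
      = θ + ∑ i ∈ g' l1, w i * ((if i = 0 then y1 else taux i) + dl i) :=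
    (eq_div_iff hWne').mp (hg5' l1)
  have hF2 : c1 * (∑ i ∈ g' l1, w i)
      = θ + ∑ i ∈ g' l1, w i * ((if i = 0 then y2 else taux i) + dl i) := by
    have := (eq_div_iff (ne_of_gt (hg2' l2))).mp (hg5' l2)
    rwa [← hSeq'] at this
  have hdiff' : (0 : ℝ) = (if (0 : Fin (n+1)) ∈ g' l1 then w 0 * (y1 - y2) else 0) := by
    rw [← snn_sum_diff w dl taux (g' l1) y1 y2]; linarith
  rw [if_pos h0mem'] at hdiff'
  rcases mul_eq_zero.mp hdiff'.symm with h' | h'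
  · exact absurd h' (ne_of_gt hw0pos)
  · exact hy12 (by linarith [sub_eq_zero.mp h'])
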